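/- Let M, N ∈ SL(2, ℝ) with bottom-left entries c_M, c_N and bottom-left entry c_{MN} of the product MN, all nonzero. Define ω(M, N) := (-log j(MN, z) + log j(M, Nz) + log j(N, z))/(2πi) using the principal branch of logarithm (argument in (-π, π]), where j((a,b;c,d), z) := cz + d and z is any point of the upper half plane. Then ω(M, N) = (sgn(c_M) + sgn(c_N) - sgn(c_{MN}) - sgn(c_M c_N c_{MN}))/4. -/

import Mathlib

/-- The automorphy factor `j(γ, z) = cz + d`. -/
noncomputable def jfac (M : Matrix.SpecialLinearGroup (Fin 2) ℝ) (z : ℂ) : ℂ :=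
  (M 1 0 : ℝ) * z + (M 1 1 : ℝ)

/-- The Möbius action of `SL(2, ℝ)` on the upper half plane. -/
noncomputable def moebiusAct (M : Matrix.SpecialLinearGroup (Fin 2) ℝ) (z : ℂ) : ℂ :=
  ((M 0 0 : ℝ) * z + (M 0 1 : ℝ)) / jfac M z

/-- The phase factor `ω(M, N)` (at the point `z`), defined via the principal
branch of the complex logarithm. -/
noncomputable def phaseFactor (M N : Matrix.SpecialLinearGroup (Fin 2) ℝ) (z : ℂ) : ℂ :=
  (-(Complex.log (jfac (M * N) z)) + Complex.log (jfac M (moebiusAct N z))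
      + Complex.log (jfac N z)) / (2 * Real.pi * Complex.I)

/-!
With `a = j(M, Nz)`, `b = j(N, z)` and the cocycle relation `j(MN, z) = ab`, the real parts of the
logarithms cancel and `2π ω(M, N) = arg a + arg b - arg (ab)`. This is a multiple of `2π` in
`(-3π, 3π)`: it is `±2π` exactly when `a` and `b` lie in the same (upper or lower) half plane and
`ab` in the other, and `0` otherwise. For `z ∈ ℍ` these half planes are read off from the signs of
`c_M`, `c_N`, `c_{MN}`, since `Im j(γ, z) = c_γ Im z` and `Nz ∈ ℍ`.
-/

open Complex Real

theorem Real.sign_mul (x y : ℝ) : Real.sign (x * y) = Real.sign x * Real.sign y := by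
  rcases lt_trichotomy x 0 with hx | rfl | hx <;> rcases lt_trichotomy y 0 with hy | rfl | hy <;>
    simp [Real.sign_of_neg, Real.sign_of_pos, mul_pos_of_neg_of_neg, mul_neg_of_neg_of_pos,
      mul_neg_of_pos_of_neg, *]

namespace Complex

theorem sign_im_eq_and_arg_mem_of_im_ne_zero {w : ℂ} (hw : w.im ≠ 0) :
    (Real.sign w.im = 1 ∧ 0 < arg w ∧ arg w < π) ∨
      (Real.sign w.im = -1 ∧ -π < arg w ∧ arg w < 0) := by
  have hlt : arg w < π := arg_lt_pi_iff.2 (Or.inr hw)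
  rcases hw.lt_or_gt with hneg | hpos
  · exact Or.inr ⟨Real.sign_of_neg hneg, neg_pi_lt_arg w, arg_neg_iff.2 hneg⟩
  · refine Or.inl ⟨Real.sign_of_pos hpos, ?_, hlt⟩
    exact (arg_nonneg_iff.2 hpos.le).lt_of_ne fun h => hpos.ne' (arg_eq_zero_iff.1 h.symm).2

theorem exists_arg_add_arg_sub_arg_mul_eq {a b : ℂ} (ha : a ≠ 0) (hb : b ≠ 0) :
    ∃ k : ℤ, arg a + arg b - arg (a * b) = 2 * π * k :=
  Real.Angle.angle_eq_iff_two_pi_dvd_sub.1 <| by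
    rw [Real.Angle.coe_add, arg_mul_coe_angle ha hb]

theorem arg_add_arg_sub_arg_mul {a b : ℂ} (ha : a.im ≠ 0) (hb : b.im ≠ 0)
    (hab : (a * b).im ≠ 0) :
    arg a + arg b - arg (a * b) =
      π / 2 * (Real.sign a.im + Real.sign b.im - Real.sign (a * b).im
        - Real.sign (a.im * b.im * (a * b).im)) := by
  obtain ⟨k, hk⟩ := exists_arg_add_arg_sub_arg_mul_eq (a := a) (b := b)
    (fun h => ha (by simp [h])) (fun h => hb (by simp [h]))
  have hk_mem : k = -1 ∨ k = 0 ∨ k = 1 := by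
    have hlo : (-2 : ℝ) < k := by
      nlinarith [pi_pos, neg_pi_lt_arg a, neg_pi_lt_arg b, arg_le_pi (a * b)]
    have hhi : (k : ℝ) < 2 := by
      nlinarith [pi_pos, arg_le_pi a, arg_le_pi b, neg_pi_lt_arg (a * b)]
    have : -2 < k ∧ k < 2 := ⟨by exact_mod_cast hlo, by exact_mod_cast hhi⟩
    omega
  rw [Real.sign_mul, Real.sign_mul]
  rcases sign_im_eq_and_arg_mem_of_im_ne_zero ha with ⟨sa, _, _⟩ | ⟨sa, _, _⟩ <;>
    rcases sign_im_eq_and_arg_mem_of_im_ne_zero hb with ⟨sb, _, _⟩ | ⟨sb, _, _⟩ <;>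
    rcases sign_im_eq_and_arg_mem_of_im_ne_zero hab with ⟨sc, _, _⟩ | ⟨sc, _, _⟩ <;>
    rcases hk_mem with rfl | rfl | rfl <;>
    · rw [sa, sb, sc]; push_cast at hk; linarith

theorem log_add_log_sub_log_mul {a b : ℂ} (ha : a ≠ 0) (hb : b ≠ 0) :
    log a + log b - log (a * b) = ((arg a + arg b - arg (a * b) : ℝ) : ℂ) * I := by
  apply Complex.ext
  · simp [log_re, Real.log_mul (norm_ne_zero_iff.2 ha) (norm_ne_zero_iff.2 hb)]
  · simp [log_im]

end Complex

section SL2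

variable (M N : Matrix.SpecialLinearGroup (Fin 2) ℝ) (z : ℂ)

theorem im_jfac : (jfac M z).im = M 1 0 * z.im := by
  simp [jfac]

theorem jfac_ne_zero (hz : 0 < z.im) : jfac M z ≠ 0 := by
  intro h
  have hc : M 1 0 = 0 := by
    have him := congrArg im h
    rw [im_jfac, zero_im] at him
    exact (mul_eq_zero.1 him).resolve_right hz.ne'
  have hd : M 1 1 = 0 := by simpa [jfac, hc] using congrArg re h
  have hdet := M.det_coe
  rw [Matrix.det_fin_two, hc, hd] at hdet
  simp at hdet

theorem im_moebiusAct : (moebiusAct M z).im = z.im / normSq (jfac M z) := by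
  have hdet : M 0 0 * M 1 1 - M 0 1 * M 1 0 = 1 := by
    rw [← Matrix.det_fin_two]; exact M.det_coe
  simp only [moebiusAct, jfac, div_im, add_im, add_re, mul_im, mul_re, ofReal_re, ofReal_im]
  rw [div_sub_div_same]
  congr 1
  linear_combination z.im * hdet

theorem im_moebiusAct_pos (hz : 0 < z.im) : 0 < (moebiusAct M z).im := by
  rw [im_moebiusAct]
  exact div_pos hz (normSq_pos.2 (jfac_ne_zero M z hz))

theorem jfac_mul (hz : jfac N z ≠ 0) : jfac (M * N) z = jfac M (moebiusAct N z) * jfac N z := by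
  have hw : moebiusAct N z * jfac N z = (N 0 0 : ℝ) * z + (N 0 1 : ℝ) := div_mul_cancel₀ _ hz
  calc jfac (M * N) z = (M 1 0 : ℝ) * (moebiusAct N z * jfac N z) + (M 1 1 : ℝ) * jfac N z := by
        rw [hw]
        simp only [jfac, Matrix.SpecialLinearGroup.coe_mul, Matrix.mul_apply, Fin.sum_univ_two]
        push_cast
        ring
    _ = jfac M (moebiusAct N z) * jfac N z := by simp only [jfac]; ring

theorem phaseFactor_eq_arg (hz : 0 < z.im) :
    phaseFactor M N z = ((arg (jfac M (moebiusAct N z)) + arg (jfac N z)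
      - arg (jfac (M * N) z)) / (2 * π) : ℝ) := by
  have hN := jfac_ne_zero N z hz
  have hM := jfac_ne_zero M _ (im_moebiusAct_pos N z hz)
  rw [phaseFactor, jfac_mul M N z hN, neg_add_eq_sub, sub_add_eq_add_sub,
    log_add_log_sub_log_mul hM hN]
  push_cast
  field_simp

end SL2

theorem phaseFactor_eq_sign_formula (M N : Matrix.SpecialLinearGroup (Fin 2) ℝ)
    (hM : M 1 0 ≠ 0) (hN : N 1 0 ≠ 0) (hMN : (M * N) 1 0 ≠ 0)
    (z : ℂ) (hz : 0 < z.im) :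
    phaseFactor M N z =
      ((Real.sign (M 1 0) + Real.sign (N 1 0) - Real.sign ((M * N) 1 0)
        - Real.sign (M 1 0 * N 1 0 * (M * N) 1 0)) / 4 : ℝ) := by
  have hw := im_moebiusAct_pos N z hz
  have hjN := jfac_ne_zero N z hz
  have ha := im_jfac M (moebiusAct N z)
  have hb := im_jfac N z
  have hab : (jfac M (moebiusAct N z) * jfac N z).im = (M * N) 1 0 * z.im := by
    rw [← jfac_mul M N z hjN, im_jfac]
  rw [phaseFactor_eq_arg M N z hz, jfac_mul M N z hjN,
    arg_add_arg_sub_arg_mul (by rw [ha]; exact mul_ne_zero hM hw.ne')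
      (by rw [hb]; exact mul_ne_zero hN hz.ne') (by rw [hab]; exact mul_ne_zero hMN hz.ne'),
    ha, hb, hab]
  simp only [Real.sign_mul, Real.sign_of_pos hw, Real.sign_of_pos hz, mul_one]
  congr 1
  field_simp
  ring
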